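/- arXiv:2112.15462 — 2 statements merged into one kernel-verified Lean document; each statement's English description precedes it below -/
import Mathlib

section
/- Let D_1, D_2 ⊆ F_2^m be nonempty, D = D_1 + wD_2 ⊆ F_4^m (so |D| = |D_1|·|D_2|), and let x = α + wβ ∈ F_4^m with α, β ∈ F_2^m. Then 4·wt(c_D(x)) = 3·|D_1|·|D_2| − [χ_α(D_1)χ_β(D_2) + χ_β(D_1)χ_{α+β}(D_2) + χ_{α+β}(D_1)χ_α(D_2)]. -/
open Finset

/-- The inner product of two binary vectors. -/
def dot2 {m : ℕ} (u v : Fin m → ZMod 2) : ZMod 2 := ∑ i, u i * v i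

/-- The character sum `χ_u(P) = Σ_{v∈P} (−1)^{⟨u,v⟩}`. -/
def chi {m : ℕ} (u : Fin m → ZMod 2) (P : Finset (Fin m → ZMod 2)) : ℤ :=
  ∑ v ∈ P, (if dot2 u v = 0 then 1 else -1)

variable {F : Type} [Field F] [Fintype F] [DecidableEq F]

/-- The embedding of `F_2 = {0,1}` into a field `F`. -/
def e2 (a : ZMod 2) : F := (a.val : F)

/-- The inner product `x·d = Σ x_i d_i` of two vectors over `F`. -/
def dotF {m : ℕ} (x d : Fin m → F) : F := ∑ i, x i * d i

/-- The quaternary vector `d_1 + w·d_2` attached to a pair of binary vectors. -/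
def dvec {m : ℕ} (w : F) (p : (Fin m → ZMod 2) × (Fin m → ZMod 2)) : Fin m → F :=
  fun i => e2 (p.1 i) + w * e2 (p.2 i)

/-- The Hamming weight of the codeword `c_D(x) = (x·d)_{d∈D}`. -/
def wtF {m : ℕ} (D : Finset (Fin m → F)) (x : Fin m → F) : ℕ :=
  (D.filter (fun d => dotF x d ≠ 0)).card

/-! In characteristic 2 with `w² = w + 1`, the product `(α + wβ)·(d₁ + wd₂)` equals `A + wB` with
`A = ⟨α,d₁⟩ + ⟨β,d₂⟩` and `B = ⟨β,d₁⟩ + ⟨α+β,d₂⟩`; as `1, w` are independent over `F₂`, it vanishes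
iff `A = B = 0`. The indicator of `(A, B) ≠ 0` is `(3 − (−1)^A − (−1)^B − (−1)^(A+B)) / 4`, and since
`A + B = ⟨α+β,d₁⟩ + ⟨α,d₂⟩`, each of the three sign sums over `D₁ × D₂` factors into a product of
two character sums. -/

section

variable {K : Type} [Field K]

def signZ2 (a : ZMod 2) : ℤ := if a = 0 then 1 else -1

lemma signZ2_add (a b : ZMod 2) : signZ2 (a + b) = signZ2 a * signZ2 b := by
  revert a b; decide

lemma signZ2_add_signZ2_add_signZ2 (a b : ZMod 2) :
    signZ2 a + signZ2 b + signZ2 (a + b) = if a = 0 ∧ b = 0 then 3 else -1 := by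
  revert a b; decide

lemma chi_mul_chi {m : ℕ} (u v : Fin m → ZMod 2) (D1 D2 : Finset (Fin m → ZMod 2)) :
    chi u D1 * chi v D2 = ∑ p ∈ D1 ×ˢ D2, signZ2 (dot2 u p.1 + dot2 v p.2) := by
  simp only [chi, sum_mul_sum, sum_product, signZ2_add]
  rfl

lemma dot2_add_left {m : ℕ} (u v d : Fin m → ZMod 2) :
    dot2 (u + v) d = dot2 u d + dot2 v d :=
  add_dotProduct u v d

lemma charP_two_of_card_eq_four [Fintype K] (hK : Fintype.card K = 4) : CharP K 2 := by
  have h4 : ((4 : ℕ) : K) = 0 := hK ▸ FiniteField.cast_card_eq_zero K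
  have h2 : (2 : K) = 0 := mul_self_eq_zero.mp (by push_cast at h4; linear_combination h4)
  exact CharTwo.of_one_ne_zero_of_two_eq_zero one_ne_zero h2

lemma e2_eq_castHom [CharP K 2] (a : ZMod 2) : (e2 a : K) = ZMod.castHom (dvd_refl 2) K a := by
  rw [ZMod.castHom_apply, ZMod.cast_eq_val]; rfl

lemma e2_add_mul_e2_eq_zero_iff {w : K} (hw : w ^ 2 + w + 1 = 0) (a b : ZMod 2) :
    e2 a + w * e2 b = 0 ↔ a = 0 ∧ b = 0 := by
  have hw0 : w ≠ 0 := by rintro rfl; simp at hw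
  have hw1 : 1 + w ≠ 0 := fun h => one_ne_zero (by linear_combination hw - w * h)
  have h01 : ∀ c : ZMod 2, c = 0 ∨ c = 1 := by decide
  rcases h01 a with rfl | rfl <;> rcases h01 b with rfl | rfl <;>
    simp [e2, ZMod.val_one, hw0, hw1]

lemma dotF_dvec [CharP K 2] {m : ℕ} {w : K} (hw : w ^ 2 + w + 1 = 0)
    (α β : Fin m → ZMod 2) (p : (Fin m → ZMod 2) × (Fin m → ZMod 2)) :
    dotF (fun i => e2 (α i) + w * e2 (β i)) (dvec w p)
      = e2 (dot2 α p.1 + dot2 β p.2) + w * e2 (dot2 β p.1 + dot2 (α + β) p.2) := by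
  have hw2 : w ^ 2 = w + 1 := by linear_combination hw - (w + 1) * CharTwo.two_eq_zero (R := K)
  simp only [e2_eq_castHom, dot2, dotF, dvec, Pi.add_apply, map_add, map_sum, map_mul, mul_sum,
    ← sum_add_distrib]
  set φ := ZMod.castHom (dvd_refl 2) K
  exact sum_congr rfl fun i _ => by linear_combination φ (β i) * φ (p.2 i) * hw2

lemma four_mul_ite_dotF_dvec_ne_zero [CharP K 2] [DecidableEq K] {m : ℕ} {w : K}
    (hw : w ^ 2 + w + 1 = 0)
    (α β : Fin m → ZMod 2) (p : (Fin m → ZMod 2) × (Fin m → ZMod 2)) :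
    4 * (if dotF (fun i => e2 (α i) + w * e2 (β i)) (dvec w p) ≠ 0 then 1 else 0 : ℤ)
      = 3 - signZ2 (dot2 α p.1 + dot2 β p.2) - signZ2 (dot2 β p.1 + dot2 (α + β) p.2)
          - signZ2 (dot2 (α + β) p.1 + dot2 α p.2) := by
  have hab : dot2 (α + β) p.1 + dot2 α p.2
      = (dot2 α p.1 + dot2 β p.2) + (dot2 β p.1 + dot2 (α + β) p.2) := by
    simp only [dot2_add_left]
    linear_combination -dot2 β p.2 * (by decide : (2 : ZMod 2) = 0)
  simp only [Ne, dotF_dvec hw, e2_add_mul_e2_eq_zero_iff hw, hab]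
  generalize dot2 α p.1 + dot2 β p.2 = a
  generalize dot2 β p.1 + dot2 (α + β) p.2 = b
  have hsigns := signZ2_add_signZ2_add_signZ2 a b
  split_ifs at hsigns ⊢ <;> linarith

lemma wtF_image_of_injOn [DecidableEq K] {ι : Type*} {m : ℕ} {S : Finset ι} {f : ι → Fin m → K}
    (hf : Set.InjOn f S) (x : Fin m → K) :
    wtF (S.image f) x = #{p ∈ S | dotF x (f p) ≠ 0} := by
  rw [wtF, filter_image, card_image_of_injOn (hf.mono (filter_subset _ S))]

end

theorem weight_formula_quaternary_general {m : ℕ}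
    (hF : Fintype.card F = 4) (w : F) (hw : w ^ 2 + w + 1 = 0)
    (D1 D2 : Finset (Fin m → ZMod 2))
    (hbij : ∀ p ∈ D1 ×ˢ D2, ∀ q ∈ D1 ×ˢ D2, dvec w p = dvec w q → p = q)
    (α β : Fin m → ZMod 2) :
    4 * (wtF ((D1 ×ˢ D2).image (dvec w)) (fun i => e2 (α i) + w * e2 (β i)) : ℤ)
      = 3 * D1.card * D2.card -
        (chi α D1 * chi β D2 + chi β D1 * chi (α + β) D2 + chi (α + β) D1 * chi α D2) := by
  have := charP_two_of_card_eq_four hF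
  rw [wtF_image_of_injOn (fun p hp q hq => hbij p hp q hq), card_filter,
    chi_mul_chi, chi_mul_chi, chi_mul_chi]
  push_cast [mul_sum, four_mul_ite_dotF_dvec_ne_zero hw, sum_sub_distrib, sum_const, card_product]
  ring

/-- For nonempty `D_1, D_2 ⊆ F_2^m`, `D = D_1 + wD_2` (with `|D| = |D_1|·|D_2|`) and
`x = α + wβ`:  `4·wt(c_D(x)) = 3|D_1||D_2| −
[χ_α(D_1)χ_β(D_2) + χ_β(D_1)χ_{α+β}(D_2) + χ_{α+β}(D_1)χ_α(D_2)]`. -/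
theorem weight_formula_quaternary {m : ℕ} (hm : 1 ≤ m)
    (hF : Fintype.card F = 4) (w : F) (hw : w ^ 2 + w + 1 = 0)
    (D1 D2 : Finset (Fin m → ZMod 2)) (h1 : D1.Nonempty) (h2 : D2.Nonempty)
    (hbij : ∀ p ∈ D1 ×ˢ D2, ∀ q ∈ D1 ×ˢ D2, dvec w p = dvec w q → p = q)
    (α β : Fin m → ZMod 2) :
    4 * (wtF ((D1 ×ˢ D2).image (dvec w)) (fun i => e2 (α i) + w * e2 (β i)) : ℤ)
      = 3 * D1.card * D2.card -
        (chi α D1 * chi β D2 + chi β D1 * chi (α + β) D2 + chi (α + β) D1 * chi α D2) :=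
  weight_formula_quaternary_general hF w hw D1 D2 hbij α β
end

section
/- Let A, B ⊆ [m] with |A| + |B| ≥ 2 and D = Δ_A + wΔ_B ⊆ F_4^m. Then |D^*| = 2^{|A|+|B|} − 1, the quaternary code C_{D^*} has exactly 4^{|A∪B|} distinct codewords (dimension |A∪B| over F_4), and the multiset {wt(c_{D^*}(x)) : x ∈ F_4^m} consists of: 0 with multiplicity 4^{m−|A∪B|}; 2^{|A|+|B|−1} with multiplicity 3·4^{m−|A∪B|}(2^{|A\B|+|B\A|} − 1); and 3·2^{|A|+|B|−2} with multiplicity 4^{m−|A∪B|}(4^{|A∪B|} − 1 − 3(2^{|A\B|+|B\A|} − 1)). In particular, if A ≠ B, the minimum nonzero weight (minimum distance) of C_{D^*} is 2^{|A|+|B|−1}. -/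
open Finset

/-- The support of a binary vector, as a finset of coordinates. -/
def supp {m : ℕ} (v : Fin m → ZMod 2) : Finset (Fin m) :=
  Finset.univ.filter (fun i => v i ≠ 0)

/-- The simplicial complex generated by `A`: all binary vectors with support contained in `A`. -/
def delta {m : ℕ} (A : Finset (Fin m)) : Finset (Fin m → ZMod 2) :=
  Finset.univ.filter (fun v => supp v ⊆ A)

variable {F : Type} [Field F] [Fintype F] [DecidableEq F]

/-- The codeword `c_D(x) = (x·d)_{d∈D}` of the code with defining set `D`. -/
def codeword {m : ℕ} (D : Finset (Fin m → F)) (x : Fin m → F) : {d // d ∈ D} → F :=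
  fun d => dotF x d.1

/-!
For fixed `x`, the map `p ↦ x·(p₁ + w p₂)` is additive on the `𝔽₂`-space `Δ_A × Δ_B` of size
`2^(|A|+|B|)`, so its image `S_x` (the set of entries of `c_D(x)`) is an additive subgroup of
`𝔽₄` and every value is attained `2^(|A|+|B|) / |S_x|` times. Since `p ↦ p₁ + w p₂` is injective,
`wt(c_{D^*}(x)) = 2^(|A|+|B|) - 2^(|A|+|B|) / |S_x|` with `|S_x| ∈ {1, 2, 4}`.
Moreover `S_x ⊆ {0, c}` iff `x_i ∈ {0, c}` for `i ∈ A` and `w x_i ∈ {0, c}` for `i ∈ B`, a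
coordinatewise condition whose solutions are counted by a product; taking `c = 0` and the three
`c ≠ 0` gives the multiplicities of `|S_x| = 1` and `|S_x| = 2`, and the remaining `x` have
`|S_x| = 4`. The codeword `c_{D^*}(x)` vanishes iff `S_x = {0}`, which counts the codewords.
-/

theorem ZMod.two_eq_zero_or_eq_one (a : ZMod 2) : a = 0 ∨ a = 1 := by
  revert a; decide

theorem ringChar_eq_two_of_card_eq_four {K : Type} [Field K] [Fintype K]
    (hK : Fintype.card K = 4) : ringChar K = 2 := by
  obtain ⟨n, hp, hn⟩ := FiniteField.card K (ringChar K)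
  have hdvd : ringChar K ∣ 2 ^ 2 := by
    rw [show (2 : ℕ) ^ 2 = 4 by norm_num, ← hK, hn]
    exact dvd_pow_self _ n.ne_zero
  exact (Nat.prime_dvd_prime_iff_eq hp Nat.prime_two).1 (hp.dvd_of_dvd_pow hdvd)

theorem card_eq_card_image_mul_card_filter_eq_zero {G M : Type*} [AddGroup G] [AddGroup M]
    [DecidableEq G] [DecidableEq M] (f : G →+ M) {s : Finset G}
    (hs_add : ∀ a ∈ s, ∀ b ∈ s, a + b ∈ s) (hs_neg : ∀ a ∈ s, -a ∈ s) :
    #s = #(s.image f) * #{g ∈ s | f g = 0} := by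
  rw [card_eq_sum_card_fiberwise fun g hg => mem_image_of_mem f hg]
  refine sum_const_nat fun y hy => ?_
  obtain ⟨g₀, hg₀, rfl⟩ := mem_image.1 hy
  refine card_bij' (fun g _ => g - g₀) (fun k _ => k + g₀) ?_ ?_ ?_ ?_
  · intro g hg
    simp only [mem_filter] at hg ⊢
    exact ⟨sub_eq_add_neg g g₀ ▸ hs_add _ hg.1 _ (hs_neg _ hg₀), by simp [hg.2]⟩
  · intro k hk
    simp only [mem_filter] at hk ⊢
    exact ⟨hs_add _ hk.1 _ hg₀, by simp [hk.2]⟩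
  · intro g _
    exact sub_add_cancel g g₀
  · intro k _
    exact add_sub_cancel_right k g₀

theorem Multiset.map_univ_val_eq_sum_replicate {α β : Type*} [Fintype α] [DecidableEq β]
    (f : α → β) {t : Finset β} (hf : ∀ a, f a ∈ t) :
    (univ : Finset α).val.map f = ∑ b ∈ t, Multiset.replicate #{a | f a = b} b := by
  ext b
  rw [Multiset.count_map, Multiset.count_sum', Finset.sum_eq_single b]
  · simp only [eq_comm, Multiset.count_replicate_self]
    rfl
  · intro c _ hc
    simp [Multiset.count_replicate, hc]
  · intro hb
    rw [Multiset.count_replicate_self, Finset.card_eq_zero, filter_eq_empty_iff]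
    exact fun a _ ha => hb (ha ▸ hf a)

theorem prod_ite_mem_ite_mem {M : Type*} [CommMonoid M] {m : ℕ} (A B : Finset (Fin m))
    (r q : M) :
    ∏ i, (if i ∈ A then (if i ∈ B then 1 else r) else if i ∈ B then r else q) =
      r ^ (#(A \ B) + #(B \ A)) * q ^ (m - #(A ∪ B)) := by
  have hsplit : ∀ i, (if i ∈ A then (if i ∈ B then 1 else r) else if i ∈ B then r else q) =
      (if i ∈ A \ B then r else 1) * (if i ∈ B \ A then r else 1) *
        (if i ∈ (A ∪ B)ᶜ then q else 1) := by
    intro i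
    by_cases hA : i ∈ A <;> by_cases hB : i ∈ B <;> simp [hA, hB]
  simp only [hsplit, prod_mul_distrib, prod_ite_mem, univ_inter, prod_const, card_compl,
    Fintype.card_fin, pow_add]

section Delta

variable {m : ℕ} {A : Finset (Fin m)}

theorem mem_delta {v : Fin m → ZMod 2} : v ∈ delta A ↔ ∀ i ∉ A, v i = 0 := by
  simp only [delta, supp, mem_filter, mem_univ, true_and, subset_iff, ne_eq]
  exact forall_congr' fun i => not_imp_comm

theorem zero_mem_delta : (0 : Fin m → ZMod 2) ∈ delta A :=
  mem_delta.2 fun _ _ => rfl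

theorem add_mem_delta {u v : Fin m → ZMod 2} (hu : u ∈ delta A) (hv : v ∈ delta A) :
    u + v ∈ delta A :=
  mem_delta.2 fun i hi => by simp [mem_delta.1 hu i hi, mem_delta.1 hv i hi]

theorem neg_mem_delta {v : Fin m → ZMod 2} (hv : v ∈ delta A) : -v ∈ delta A :=
  mem_delta.2 fun i hi => by simp [mem_delta.1 hv i hi]

theorem single_mem_delta {i : Fin m} (hi : i ∈ A) : Pi.single i 1 ∈ delta A :=
  mem_delta.2 fun j hj => Pi.single_eq_of_ne (by rintro rfl; exact hj hi) 1

theorem delta_eq_piFinset :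
    delta A = Fintype.piFinset fun i => if i ∈ A then univ else {0} := by
  ext v
  simp only [mem_delta, Fintype.mem_piFinset]
  refine forall_congr' fun i => ?_
  split_ifs with hi <;> simp [hi]

theorem card_delta (A : Finset (Fin m)) : #(delta A) = 2 ^ #A := by
  simp [delta_eq_piFinset, Fintype.card_piFinset, apply_ite, prod_ite_mem]

end Delta

section Dvec

variable {K : Type} [Field K] {m : ℕ} {w : K}

@[simp]
theorem e2_zero : (e2 0 : K) = 0 := by
  rw [e2, ZMod.val_zero, Nat.cast_zero]

@[simp]
theorem e2_one : (e2 1 : K) = 1 := by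
  rw [e2, ZMod.val_one, Nat.cast_one]

theorem dotF_dvec_single_zero (x : Fin m → K) (i : Fin m) :
    dotF x (dvec w (Pi.single i 1, 0)) = x i := by
  have : dvec w (Pi.single i 1, 0) = Pi.single i (1 : K) := by
    ext j
    by_cases h : j = i <;> simp [dvec, h]
  rw [dotF, ← dotProduct, this, dotProduct_single, mul_one]

theorem dotF_dvec_zero_single (x : Fin m → K) (i : Fin m) :
    dotF x (dvec w (0, Pi.single i 1)) = x i * w := by
  have : dvec w (0, Pi.single i 1) = Pi.single i w := by
    ext j
    by_cases h : j = i <;> simp [dvec, h]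
  rw [dotF, ← dotProduct, this, dotProduct_single]

variable [CharP K 2]

theorem e2_add (a b : ZMod 2) : (e2 (a + b) : K) = e2 a + e2 b := by
  simp only [e2, ← ZMod.cast_eq_val, ZMod.cast_add (dvd_refl 2)]

theorem dvec_add (w : K) (p q : (Fin m → ZMod 2) × (Fin m → ZMod 2)) :
    dvec w (p + q) = dvec w p + dvec w q := by
  ext i
  simp only [dvec, Prod.fst_add, Prod.snd_add, Pi.add_apply, e2_add]
  ring

def dvecHom (w : K) : (Fin m → ZMod 2) × (Fin m → ZMod 2) →+ (Fin m → K) :=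
  AddMonoidHom.mk' (dvec w) (dvec_add w)

theorem eq_zero_of_e2_add_mul_e2_eq_zero (hw0 : w ≠ 0) (hw1 : w ≠ 1) {a b : ZMod 2}
    (h : e2 a + w * e2 b = (0 : K)) : a = 0 ∧ b = 0 := by
  rcases a.two_eq_zero_or_eq_one with rfl | rfl <;>
    rcases b.two_eq_zero_or_eq_one with rfl | rfl <;>
    simp [CharTwo.add_eq_zero, hw0, Ne.symm hw1] at h ⊢

theorem dvec_injective (hw0 : w ≠ 0) (hw1 : w ≠ 1) : Function.Injective (dvec (m := m) w) := by
  refine (injective_iff_map_eq_zero (dvecHom w)).2 fun p hp => ?_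
  have h i := eq_zero_of_e2_add_mul_e2_eq_zero hw0 hw1 (congrFun hp i)
  exact Prod.ext (funext fun i => (h i).1) (funext fun i => (h i).2)

def dotDvecHom (w : K) (x : Fin m → K) : (Fin m → ZMod 2) × (Fin m → ZMod 2) →+ K :=
  AddMonoidHom.mk' (fun p => dotF x (dvec w p)) fun p q =>
    (congrArg (x ⬝ᵥ ·) (dvec_add w p q)).trans (dotProduct_add x _ _)

end Dvec

section Entries

variable {K : Type} [Field K] [DecidableEq K] {m : ℕ} {w : K} {A B : Finset (Fin m)}

/-- The set `{x·d : d ∈ Δ_A + wΔ_B}` of entries of the codeword `c_D(x)`. -/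
def codewordEntries (w : K) (A B : Finset (Fin m)) (x : Fin m → K) : Finset K :=
  (delta A ×ˢ delta B).image fun p => dotF x (dvec w p)

theorem zero_mem_codewordEntries (x : Fin m → K) : 0 ∈ codewordEntries w A B x :=
  mem_image.2 ⟨0, mem_product.2 ⟨zero_mem_delta, zero_mem_delta⟩, by simp [dotF, dvec]⟩

theorem apply_mem_codewordEntries {x : Fin m → K} {i : Fin m} (hi : i ∈ A) :
    x i ∈ codewordEntries w A B x :=
  mem_image.2 ⟨_, mem_product.2 ⟨single_mem_delta hi, zero_mem_delta⟩, dotF_dvec_single_zero x i⟩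

theorem mul_apply_mem_codewordEntries {x : Fin m → K} {i : Fin m} (hi : i ∈ B) :
    x i * w ∈ codewordEntries w A B x :=
  mem_image.2 ⟨_, mem_product.2 ⟨zero_mem_delta, single_mem_delta hi⟩, dotF_dvec_zero_single x i⟩

theorem card_codewordEntries_eq_one_iff {x : Fin m → K} :
    #(codewordEntries w A B x) = 1 ↔ codewordEntries w A B x ⊆ {0} := by
  rw [Nonempty.subset_singleton_iff ⟨0, zero_mem_codewordEntries x⟩, card_eq_one]
  refine ⟨fun ⟨a, ha⟩ => ?_, fun h => ⟨0, h⟩⟩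
  have h0 := zero_mem_codewordEntries (w := w) (A := A) (B := B) x
  rw [ha, mem_singleton] at h0
  rw [ha, h0]

theorem card_codewordEntries_eq_two_iff {x : Fin m → K} :
    #(codewordEntries w A B x) = 2 ↔
      ∃ c ≠ 0, codewordEntries w A B x ⊆ {0, c} ∧ ¬ codewordEntries w A B x ⊆ {0} := by
  have h0 := zero_mem_codewordEntries (w := w) (A := A) (B := B) x
  constructor
  · intro h
    obtain ⟨a, b, hab, hS⟩ := card_eq_two.1 h
    have hS0 : (0 : K) ∈ ({a, b} : Finset K) := hS ▸ h0
    simp only [mem_insert, mem_singleton] at hS0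
    rcases hS0 with rfl | rfl
    · refine ⟨b, hab.symm, hS.subset, fun h' => hab.symm (mem_singleton.1 (h' ?_))⟩
      rw [hS]; simp
    · refine ⟨a, hab, by rw [hS, pair_comm], fun h' => hab (mem_singleton.1 (h' ?_))⟩
      rw [hS]; simp
  · rintro ⟨c, -, hc, hne⟩
    have hle : #(codewordEntries w A B x) ≤ 2 := (card_le_card hc).trans card_le_two
    have hpos : 0 < #(codewordEntries w A B x) := card_pos.2 ⟨0, h0⟩
    have hne1 : #(codewordEntries w A B x) ≠ 1 := mt card_codewordEntries_eq_one_iff.1 hne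
    omega

theorem wtF_erase_zero (D : Finset (Fin m → K)) (x : Fin m → K) :
    wtF (D.erase 0) x = wtF D x := by
  unfold wtF
  congr 1
  ext d
  simp only [mem_filter, mem_erase, and_congr_left_iff, and_iff_right_iff_imp]
  rintro h _ rfl
  simp [dotF] at h

theorem codeword_eq_zero_iff {x : Fin m → K} :
    codeword (((delta A ×ˢ delta B).image (dvec w)).erase 0) x = 0 ↔
      codewordEntries w A B x ⊆ {0} := by
  rw [funext_iff]
  simp only [codeword, Pi.zero_apply, Subtype.forall, mem_erase, codewordEntries, subset_iff,
    mem_image, mem_singleton, forall_exists_index, and_imp]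
  constructor
  · rintro h _ p hp rfl
    by_cases hp0 : dvec w p = 0
    · simp [hp0, dotF]
    · exact h _ hp0 p hp rfl
  · rintro h _ - p hp rfl
    exact h p hp rfl

variable [CharP K 2]

theorem add_mem_zero_pair {c s t : K} (hs : s ∈ ({0, c} : Finset K))
    (ht : t ∈ ({0, c} : Finset K)) : s + t ∈ ({0, c} : Finset K) := by
  simp only [mem_insert, mem_singleton] at hs ht
  rcases hs with rfl | rfl <;> rcases ht with rfl | rfl <;> simp [CharTwo.add_self_eq_zero]

theorem codewordEntries_subset_pair_iff {c : K} {x : Fin m → K} :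
    codewordEntries w A B x ⊆ {0, c} ↔
      (∀ i ∈ A, x i = 0 ∨ x i = c) ∧ ∀ i ∈ B, x i * w = 0 ∨ x i * w = c := by
  have hpair : ∀ {t : K}, t ∈ ({0, c} : Finset K) ↔ t = 0 ∨ t = c := by simp
  refine ⟨fun h => ⟨fun i hi => hpair.1 (h (apply_mem_codewordEntries hi)),
    fun i hi => hpair.1 (h (mul_apply_mem_codewordEntries hi))⟩, ?_⟩
  rintro ⟨hA, hB⟩ _ ht
  obtain ⟨p, hp, rfl⟩ := mem_image.1 ht
  obtain ⟨hp₁, hp₂⟩ := mem_product.1 hp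
  have hterm : ∀ (t : K) (a : ZMod 2), (a ≠ 0 → t = 0 ∨ t = c) →
      t * e2 a ∈ ({0, c} : Finset K) := by
    intro t a ha
    rcases a.two_eq_zero_or_eq_one with rfl | rfl
    · simp
    · simpa using ha one_ne_zero
  refine sum_induction _ (· ∈ ({0, c} : Finset K)) (fun _ _ => add_mem_zero_pair) (by simp)
    fun i _ => ?_
  rw [show x i * dvec w p i = x i * e2 (p.1 i) + x i * w * e2 (p.2 i) by simp only [dvec]; ring]
  refine add_mem_zero_pair (hterm _ _ fun h => hA i ?_) (hterm _ _ fun h => hB i ?_)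
  · exact not_not.1 fun hi => h (mem_delta.1 hp₁ i hi)
  · exact not_not.1 fun hi => h (mem_delta.1 hp₂ i hi)

theorem exists_card_codewordEntries_eq_two (hw0 : w ≠ 0) (hne : A ≠ B) :
    ∃ x : Fin m → K, #(codewordEntries w A B x) = 2 := by
  obtain ⟨i, hi⟩ : ∃ i, i ∈ A ∧ i ∉ B ∨ i ∈ B ∧ i ∉ A := by
    by_contra! h
    exact hne (ext fun i => ⟨(h i).1, (h i).2⟩)
  refine ⟨Pi.single i 1, card_codewordEntries_eq_two_iff.2 ?_⟩
  rcases hi with ⟨hA, hB⟩ | ⟨hB, hA⟩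
  · refine ⟨1, one_ne_zero, codewordEntries_subset_pair_iff.2 ⟨fun j _ => ?_, fun j hj => ?_⟩,
      fun h => ?_⟩
    · by_cases hji : j = i <;> simp [hji]
    · simp [show j ≠ i by rintro rfl; exact hB hj]
    · simpa using h (apply_mem_codewordEntries hA)
  · refine ⟨w, hw0, codewordEntries_subset_pair_iff.2 ⟨fun j hj => ?_, fun j _ => ?_⟩,
      fun h => ?_⟩
    · simp [show j ≠ i by rintro rfl; exact hA hj]
    · by_cases hji : j = i <;> simp [hji]
    · simpa [hw0] using h (mul_apply_mem_codewordEntries hB)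

theorem card_erase_zero_image_dvec (hw0 : w ≠ 0) (hw1 : w ≠ 1) :
    #(((delta A ×ˢ delta B).image (dvec w)).erase 0) = 2 ^ (#A + #B) - 1 := by
  have h0 : (0 : Fin m → K) ∈ (delta A ×ˢ delta B).image (dvec w) :=
    mem_image.2 ⟨0, mem_product.2 ⟨zero_mem_delta, zero_mem_delta⟩, (dvecHom w).map_zero⟩
  rw [card_erase_of_mem h0, card_image_of_injective _ (dvec_injective hw0 hw1), card_product,
    card_delta, card_delta, pow_add]

theorem card_codewordEntries_mul_card_filter (x : Fin m → K) :
    #(codewordEntries w A B x) * #{p ∈ delta A ×ˢ delta B | dotF x (dvec w p) = 0} =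
      2 ^ (#A + #B) := by
  rw [pow_add, ← card_delta A, ← card_delta B, ← card_product (delta A) (delta B)]
  refine (card_eq_card_image_mul_card_filter_eq_zero (dotDvecHom w x) ?_ ?_).symm
  · intro a ha b hb
    simp only [mem_product] at ha hb ⊢
    exact ⟨add_mem_delta ha.1 hb.1, add_mem_delta ha.2 hb.2⟩
  · intro a ha
    simp only [mem_product] at ha ⊢
    exact ⟨neg_mem_delta ha.1, neg_mem_delta ha.2⟩

theorem card_codewordEntries_dvd (x : Fin m → K) :
    #(codewordEntries w A B x) ∣ 2 ^ (#A + #B) :=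
  Dvd.intro _ (card_codewordEntries_mul_card_filter x)

theorem wtF_add_card_filter (hw0 : w ≠ 0) (hw1 : w ≠ 1) (x : Fin m → K) :
    wtF (((delta A ×ˢ delta B).image (dvec w)).erase 0) x
      + #{p ∈ delta A ×ˢ delta B | dotF x (dvec w p) = 0} = 2 ^ (#A + #B) := by
  have hsplit := card_filter_add_card_filter_not (s := delta A ×ˢ delta B)
    (p := fun p => dotF x (dvec w p) ≠ 0)
  simp only [not_not] at hsplit
  rw [wtF_erase_zero, wtF, filter_image, card_image_of_injective _ (dvec_injective hw0 hw1),
    hsplit, card_product, card_delta, card_delta, pow_add]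

theorem wtF_add_pow_sub_eq (hw0 : w ≠ 0) (hw1 : w ≠ 1) {x : Fin m → K} {j : ℕ}
    (hj : #(codewordEntries w A B x) = 2 ^ j) :
    j ≤ #A + #B ∧ wtF (((delta A ×ˢ delta B).image (dvec w)).erase 0) x + 2 ^ (#A + #B - j) =
      2 ^ (#A + #B) := by
  have hle : j ≤ #A + #B :=
    (Nat.pow_dvd_pow_iff_le_right one_lt_two).1 (hj ▸ card_codewordEntries_dvd x)
  refine ⟨hle, ?_⟩
  have hpos : 0 < #(codewordEntries w A B x) := card_pos.2 ⟨0, zero_mem_codewordEntries x⟩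
  rw [← Nat.pow_div hle two_pos, ← hj, ← card_codewordEntries_mul_card_filter x,
    Nat.mul_div_cancel_left _ hpos, card_codewordEntries_mul_card_filter x,
    wtF_add_card_filter hw0 hw1]

end Entries

section Counting

variable {K : Type} [Field K] [Fintype K] [DecidableEq K] {m : ℕ} {w : K}
  {A B : Finset (Fin m)}

def codewordHom (D : Finset (Fin m → K)) : (Fin m → K) →+ ({d // d ∈ D} → K) :=
  AddMonoidHom.mk' (codeword D) fun x y => funext fun d => add_dotProduct x y d.1

theorem card_image_codeword_mul_card_filter (D : Finset (Fin m → K)) :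
    #(univ.image (codeword D)) * #{x | codeword D x = 0} = Fintype.card K ^ m := by
  have huniv : #(univ : Finset (Fin m → K)) = Fintype.card K ^ m := by simp
  rw [← huniv]
  exact (card_eq_card_image_mul_card_filter_eq_zero (codewordHom D) (by simp) (by simp)).symm

/-- The admissible values of `x i` when all entries of `c_D(x)` lie in `{0, c}`. -/
def lineCoords (w c : K) (A B : Finset (Fin m)) (i : Fin m) : Finset K :=
  {t | (i ∈ A → t = 0 ∨ t = c) ∧ (i ∈ B → t * w = 0 ∨ t * w = c)}

theorem card_lineCoords (hw0 : w ≠ 0) (hw1 : w ≠ 1) (c : K) (i : Fin m) :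
    #(lineCoords w c A B i) =
      if i ∈ A then (if i ∈ B then 1 else #({0, c} : Finset K))
      else if i ∈ B then #({0, c} : Finset K) else Fintype.card K := by
  by_cases hA : i ∈ A <;> by_cases hB : i ∈ B <;> simp only [hA, hB, if_true, if_false]
  · rw [card_eq_one]
    refine ⟨0, ?_⟩
    ext t
    simp only [lineCoords, hA, hB, forall_const, mem_filter, mem_univ, true_and, mem_singleton]
    constructor
    · rintro ⟨rfl | rfl, h | h⟩
      · rfl
      · rfl
      · exact (mul_eq_zero.1 h).resolve_right hw0
      · exact (mul_right_eq_self₀.1 h).resolve_left hw1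
    · rintro rfl
      simp
  · congr 1
    ext t
    simp [lineCoords, hA, hB]
  · refine card_nbij' (· * w) (· * w⁻¹) ?_ ?_ ?_ ?_
    · intro t ht
      simpa [lineCoords, hA, hB] using ht
    · intro t ht
      simpa [lineCoords, hA, hB, hw0] using ht
    · intro t _
      simp [hw0]
    · intro t _
      simp [hw0]
  · congr 1
    ext t
    simp [lineCoords, hA, hB]

variable [CharP K 2]

theorem card_filter_codewordEntries_subset_pair (hw0 : w ≠ 0) (hw1 : w ≠ 1) (c : K) :
    #{x : Fin m → K | codewordEntries w A B x ⊆ {0, c}} =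
      #({0, c} : Finset K) ^ (#(A \ B) + #(B \ A)) * Fintype.card K ^ (m - #(A ∪ B)) := by
  have hpi : ({x | codewordEntries w A B x ⊆ {0, c}} : Finset (Fin m → K)) =
      Fintype.piFinset (lineCoords w c A B) := by
    ext x
    simp [codewordEntries_subset_pair_iff, lineCoords, forall_and]
  rw [hpi, Fintype.card_piFinset]
  simp only [card_lineCoords hw0 hw1]
  exact prod_ite_mem_ite_mem A B _ _

theorem card_filter_codewordEntries_subset_zero (hw0 : w ≠ 0) (hw1 : w ≠ 1) :
    #{x : Fin m → K | codewordEntries w A B x ⊆ {0}} = Fintype.card K ^ (m - #(A ∪ B)) := by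
  simpa using card_filter_codewordEntries_subset_pair (A := A) (B := B) hw0 hw1 0

theorem card_image_codeword (hw0 : w ≠ 0) (hw1 : w ≠ 1) :
    #(univ.image (codeword (((delta A ×ˢ delta B).image (dvec w)).erase 0))) =
      Fintype.card K ^ #(A ∪ B) := by
  have h := card_image_codeword_mul_card_filter (((delta A ×ˢ delta B).image (dvec w)).erase 0)
  simp only [codeword_eq_zero_iff, card_filter_codewordEntries_subset_zero hw0 hw1] at h
  have hu : #(A ∪ B) ≤ m := by simpa using card_le_univ (A ∪ B)
  rw [← pow_mul_pow_sub _ hu] at h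
  exact Nat.eq_of_mul_eq_mul_right (pow_pos Fintype.card_pos _) h

theorem card_filter_card_codewordEntries_eq_one (hw0 : w ≠ 0) (hw1 : w ≠ 1) :
    #{x : Fin m → K | #(codewordEntries w A B x) = 1} = Fintype.card K ^ (m - #(A ∪ B)) := by
  simp only [card_codewordEntries_eq_one_iff]
  exact card_filter_codewordEntries_subset_zero hw0 hw1

theorem card_filter_card_codewordEntries_eq_two (hw0 : w ≠ 0) (hw1 : w ≠ 1) :
    #{x : Fin m → K | #(codewordEntries w A B x) = 2} =
      (Fintype.card K - 1) * (2 ^ (#(A \ B) + #(B \ A)) * Fintype.card K ^ (m - #(A ∪ B))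
        - Fintype.card K ^ (m - #(A ∪ B))) := by
  have hunion : ({x | #(codewordEntries w A B x) = 2} : Finset (Fin m → K)) =
      (univ.erase 0).biUnion fun c => ({x | codewordEntries w A B x ⊆ {0, c}} :
        Finset (Fin m → K)) \ ({x | codewordEntries w A B x ⊆ {0}} : Finset (Fin m → K)) := by
    ext x
    simp only [mem_filter, mem_univ, true_and, mem_biUnion, mem_erase, mem_sdiff, and_true,
      card_codewordEntries_eq_two_iff]
  have hdisj : ((univ.erase 0 : Finset K) : Set K).PairwiseDisjoint fun c =>
      ({x | codewordEntries w A B x ⊆ {0, c}} : Finset (Fin m → K)) \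
        ({x | codewordEntries w A B x ⊆ {0}} : Finset (Fin m → K)) := by
    intro c _ c' _ hcc'
    simp only [Function.onFun, disjoint_left, mem_sdiff, mem_filter, mem_univ, true_and]
    rintro x ⟨hc, h0⟩ ⟨hc', -⟩
    obtain ⟨t, ht, ht0⟩ := not_subset.1 h0
    have htc := hc ht
    have htc' := hc' ht
    simp only [mem_insert, mem_singleton] at htc htc' ht0
    grind
  rw [hunion, card_biUnion hdisj, sum_const_nat fun c hc => ?_]
  · rw [card_erase_of_mem (mem_univ 0), card_univ]
  · have hsub : ({x | codewordEntries w A B x ⊆ {0}} : Finset (Fin m → K)) ⊆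
        ({x | codewordEntries w A B x ⊆ {0, c}} : Finset (Fin m → K)) := fun x hx => by
      simp only [mem_filter, mem_univ, true_and] at hx ⊢
      exact hx.trans (by simp)
    rw [card_sdiff_of_subset hsub, card_filter_codewordEntries_subset_pair hw0 hw1,
      card_filter_codewordEntries_subset_zero hw0 hw1, card_pair (ne_of_mem_erase hc).symm]

end Counting

section Quaternary

variable {K : Type} [Field K] [Fintype K] [DecidableEq K] [CharP K 2] {m : ℕ} {w : K}
  {A B : Finset (Fin m)}

theorem card_codewordEntries_mem (hK : Fintype.card K = 4) (x : Fin m → K) :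
    #(codewordEntries w A B x) ∈ ({1, 2, 4} : Finset ℕ) := by
  obtain ⟨j, -, hj⟩ := (Nat.dvd_prime_pow Nat.prime_two).1
    (card_codewordEntries_dvd (w := w) (A := A) (B := B) x)
  have hle : 2 ^ j ≤ 2 ^ 2 := by
    rw [← hj]
    simpa [hK] using card_le_univ (codewordEntries w A B x)
  have : j ≤ 2 := (Nat.pow_le_pow_iff_right one_lt_two).1 hle
  interval_cases j <;> simp [hj]

theorem wtF_eq_ite (hK : Fintype.card K = 4) (hw0 : w ≠ 0) (hw1 : w ≠ 1) (x : Fin m → K) :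
    wtF (((delta A ×ˢ delta B).image (dvec w)).erase 0) x =
      if #(codewordEntries w A B x) = 1 then 0
      else if #(codewordEntries w A B x) = 2 then 2 ^ (#A + #B - 1)
      else 3 * 2 ^ (#A + #B - 2) := by
  have hmem := card_codewordEntries_mem (w := w) (A := A) (B := B) hK x
  simp only [mem_insert, mem_singleton] at hmem
  rcases hmem with h | h | h
  · obtain ⟨-, hW⟩ := wtF_add_pow_sub_eq hw0 hw1 (h.trans (pow_zero 2).symm)
    simp only [h, if_true, Nat.sub_zero] at hW ⊢
    omega
  · obtain ⟨hn, hW⟩ := wtF_add_pow_sub_eq hw0 hw1 (h.trans (pow_one 2).symm)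
    simp only [h, OfNat.ofNat_ne_one, if_false, if_true]
    generalize #A + #B = n at hn hW ⊢
    obtain ⟨k, rfl⟩ : ∃ k, n = k + 1 := ⟨n - 1, by omega⟩
    simp only [add_tsub_cancel_right, pow_succ] at hW ⊢
    omega
  · obtain ⟨hn, hW⟩ := wtF_add_pow_sub_eq hw0 hw1 (h.trans (by norm_num : 4 = 2 ^ 2))
    simp only [h, OfNat.ofNat_ne_one, if_false, show (4 : ℕ) ≠ 2 by norm_num]
    generalize #A + #B = n at hn hW ⊢
    obtain ⟨k, rfl⟩ : ∃ k, n = k + 2 := ⟨n - 2, by omega⟩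
    simp only [add_tsub_cancel_right, pow_succ] at hW ⊢
    omega

theorem card_filter_card_codewordEntries_eq_four (hK : Fintype.card K = 4) (hw0 : w ≠ 0)
    (hw1 : w ≠ 1) :
    #{x : Fin m → K | #(codewordEntries w A B x) = 4} =
      4 ^ (m - #(A ∪ B)) * (4 ^ #(A ∪ B) - 1 - 3 * (2 ^ (#(A \ B) + #(B \ A)) - 1)) := by
  have htot := card_eq_sum_card_fiberwise (s := univ) (t := {1, 2, 4})
    fun x _ => card_codewordEntries_mem (w := w) (A := A) (B := B) hK x
  rw [sum_insert (by decide), sum_insert (by decide), sum_singleton,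
    card_filter_card_codewordEntries_eq_one hw0 hw1,
    card_filter_card_codewordEntries_eq_two hw0 hw1, card_univ, Fintype.card_fun,
    Fintype.card_fin, hK] at htot
  have hu : #(A ∪ B) ≤ m := by simpa using card_le_univ (A ∪ B)
  rw [← pow_mul_pow_sub _ hu] at htot
  set E := 4 ^ (m - #(A ∪ B))
  have h3 : E * (3 * (2 ^ (#(A \ B) + #(B \ A)) - 1)) =
      (4 - 1) * (2 ^ (#(A \ B) + #(B \ A)) * E - E) := by
    rw [mul_left_comm, Nat.mul_sub_one, mul_comm E]
  rw [Nat.mul_sub, Nat.mul_sub, mul_one, h3, mul_comm E]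
  omega

theorem map_univ_wtF (hK : Fintype.card K = 4) (hw0 : w ≠ 0) (hw1 : w ≠ 1) :
    (univ : Finset (Fin m → K)).val.map
        (fun x => wtF (((delta A ×ˢ delta B).image (dvec w)).erase 0) x) =
      Multiset.replicate (4 ^ (m - #(A ∪ B))) 0
        + Multiset.replicate (3 * 4 ^ (m - #(A ∪ B)) * (2 ^ (#(A \ B) + #(B \ A)) - 1))
          (2 ^ (#A + #B - 1))
        + Multiset.replicate
          (4 ^ (m - #(A ∪ B)) * (4 ^ #(A ∪ B) - 1 - 3 * (2 ^ (#(A \ B) + #(B \ A)) - 1)))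
          (3 * 2 ^ (#A + #B - 2)) := by
  rw [Multiset.map_congr rfl fun x _ => wtF_eq_ite hK hw0 hw1 x]
  refine (Multiset.map_map (fun t => if t = 1 then 0 else if t = 2 then 2 ^ (#A + #B - 1)
    else 3 * 2 ^ (#A + #B - 2)) (fun x => #(codewordEntries w A B x)) _).symm.trans ?_
  rw [Multiset.map_univ_val_eq_sum_replicate _ (card_codewordEntries_mem hK),
    sum_insert (by decide), sum_insert (by decide), sum_singleton]
  have h2 : (4 - 1) * (2 ^ (#(A \ B) + #(B \ A)) * 4 ^ (m - #(A ∪ B)) - 4 ^ (m - #(A ∪ B))) =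
      3 * 4 ^ (m - #(A ∪ B)) * (2 ^ (#(A \ B) + #(B \ A)) - 1) := by
    rw [mul_assoc, Nat.mul_sub_one, mul_comm (4 ^ _)]
  simp only [Multiset.map_add, Multiset.map_replicate, hK, h2, add_assoc,
    card_filter_card_codewordEntries_eq_one hw0 hw1,
    card_filter_card_codewordEntries_eq_two hw0 hw1,
    card_filter_card_codewordEntries_eq_four hK hw0 hw1]
  norm_num

theorem wtF_eq_zero_or_pow_le (hK : Fintype.card K = 4) (hw0 : w ≠ 0) (hw1 : w ≠ 1)
    (x : Fin m → K) :
    wtF (((delta A ×ˢ delta B).image (dvec w)).erase 0) x = 0 ∨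
      2 ^ (#A + #B - 1) ≤ wtF (((delta A ×ˢ delta B).image (dvec w)).erase 0) x := by
  rw [wtF_eq_ite hK hw0 hw1 x]
  split_ifs
  · exact Or.inl rfl
  · exact Or.inr le_rfl
  · refine Or.inr ((Nat.pow_le_pow_right two_pos (by omega : #A + #B - 1 ≤ #A + #B - 2 + 1)).trans ?_)
    rw [pow_succ]
    omega

theorem exists_wtF_eq (hK : Fintype.card K = 4) (hw0 : w ≠ 0) (hw1 : w ≠ 1) (hne : A ≠ B) :
    ∃ x : Fin m → K,
      wtF (((delta A ×ˢ delta B).image (dvec w)).erase 0) x = 2 ^ (#A + #B - 1) := by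
  obtain ⟨x, hx⟩ := exists_card_codewordEntries_eq_two hw0 hne
  exact ⟨x, by simp [wtF_eq_ite hK hw0 hw1 x, hx]⟩

end Quaternary

theorem quaternary_code_simplicial_pair_general {m : ℕ}
    (hF : Fintype.card F = 4) (w : F) (hw : w ^ 2 + w + 1 = 0)
    (A B : Finset (Fin m)) :
    (((delta A ×ˢ delta B).image (dvec w)).erase 0).card = 2 ^ (A.card + B.card) - 1
    ∧ (Finset.univ.image
        (fun x : Fin m → F => codeword (((delta A ×ˢ delta B).image (dvec w)).erase 0) x)).card
      = 4 ^ (A ∪ B).card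
    ∧ (Finset.univ.val.map
        (fun x : Fin m → F => wtF (((delta A ×ˢ delta B).image (dvec w)).erase 0) x))
      = Multiset.replicate (4 ^ (m - (A ∪ B).card)) 0
        + Multiset.replicate (3 * 4 ^ (m - (A ∪ B).card)
            * (2 ^ ((A \ B).card + (B \ A).card) - 1)) (2 ^ (A.card + B.card - 1))
        + Multiset.replicate (4 ^ (m - (A ∪ B).card)
            * (4 ^ (A ∪ B).card - 1 - 3 * (2 ^ ((A \ B).card + (B \ A).card) - 1)))
          (3 * 2 ^ (A.card + B.card - 2))
    ∧ (A ≠ B →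
        (∀ x : Fin m → F, wtF (((delta A ×ˢ delta B).image (dvec w)).erase 0) x = 0
            ∨ 2 ^ (A.card + B.card - 1) ≤ wtF (((delta A ×ˢ delta B).image (dvec w)).erase 0) x)
        ∧ (∃ x : Fin m → F,
            wtF (((delta A ×ˢ delta B).image (dvec w)).erase 0) x = 2 ^ (A.card + B.card - 1))) := by
  have : CharP F 2 := ringChar.of_eq (ringChar_eq_two_of_card_eq_four hF)
  have hw0 : w ≠ 0 := by
    rintro rfl
    simp at hw
  have hw1 : w ≠ 1 := by
    rintro rfl
    simp [CharTwo.add_self_eq_zero] at hw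
  refine ⟨card_erase_zero_image_dvec hw0 hw1, hF ▸ card_image_codeword hw0 hw1,
    map_univ_wtF hF hw0 hw1, fun hne => ⟨wtF_eq_zero_or_pow_le hF hw0 hw1,
      exists_wtF_eq hF hw0 hw1 hne⟩⟩

/-- Proposition 4.2: for `D = Δ_A + wΔ_B` with `|A|+|B| ≥ 2`, the punctured code `C_{D^*}`
is a `[2^{|A|+|B|}−1, |A∪B|, 2^{|A|+|B|−1}]` quaternary code with the stated weight
distribution; if `A ≠ B` its minimum distance is `2^{|A|+|B|−1}`. -/
theorem quaternary_code_simplicial_pair {m : ℕ} (hm : 1 ≤ m)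
    (hF : Fintype.card F = 4) (w : F) (hw : w ^ 2 + w + 1 = 0)
    (A B : Finset (Fin m)) (hAB : 2 ≤ A.card + B.card) :
    (((delta A ×ˢ delta B).image (dvec w)).erase 0).card = 2 ^ (A.card + B.card) - 1
    ∧ (Finset.univ.image
        (fun x : Fin m → F => codeword (((delta A ×ˢ delta B).image (dvec w)).erase 0) x)).card
      = 4 ^ (A ∪ B).card
    ∧ (Finset.univ.val.map
        (fun x : Fin m → F => wtF (((delta A ×ˢ delta B).image (dvec w)).erase 0) x))
      = Multiset.replicate (4 ^ (m - (A ∪ B).card)) 0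
        + Multiset.replicate (3 * 4 ^ (m - (A ∪ B).card)
            * (2 ^ ((A \ B).card + (B \ A).card) - 1)) (2 ^ (A.card + B.card - 1))
        + Multiset.replicate (4 ^ (m - (A ∪ B).card)
            * (4 ^ (A ∪ B).card - 1 - 3 * (2 ^ ((A \ B).card + (B \ A).card) - 1)))
          (3 * 2 ^ (A.card + B.card - 2))
    ∧ (A ≠ B →
        (∀ x : Fin m → F, wtF (((delta A ×ˢ delta B).image (dvec w)).erase 0) x = 0
            ∨ 2 ^ (A.card + B.card - 1) ≤ wtF (((delta A ×ˢ delta B).image (dvec w)).erase 0) x)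
        ∧ (∃ x : Fin m → F,
            wtF (((delta A ×ˢ delta B).image (dvec w)).erase 0) x = 2 ^ (A.card + B.card - 1))) :=
  quaternary_code_simplicial_pair_general hF w hw A B
end
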